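/- arXiv:2006.00196 — 2 statements merged into one kernel-verified Lean document; each statement's English description precedes it below -/
import Mathlib

section
/- For every 3×3 real matrix U with U·Uᵀ = E₃ and det U = 1 (i.e. U ∈ SO(3)), there exists a quaternion a of norm 1 such that for every pure quaternion x, the pure quaternion a·x·ā corresponds, under the identification of pure quaternions with ℝ³, to the vector U·x. That is, the conjugation map T : B → SO(3) is surjective. -/
open scoped Quaternion

/-- The pure quaternion corresponding to a vector in ℝ³. -/
def pureOfVec (y : Fin 3 → ℝ) : ℍ[ℝ] := ⟨0, y 0, y 1, y 2⟩

/-- The vector in ℝ³ corresponding to a pure quaternion. -/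
def vecOfPure (x : ℍ[ℝ]) : Fin 3 → ℝ := ![x.imI, x.imJ, x.imK]

lemma vec_pure (y : Fin 3 → ℝ) : vecOfPure (pureOfVec y) = y := by
  funext i; fin_cases i <;> simp [vecOfPure, pureOfVec]

lemma exists_cos_sin (c s : ℝ) (h : c^2 + s^2 = 1) :
    ∃ θ : ℝ, Real.cos θ = c ∧ Real.sin θ = s := by
  have hz : ‖(⟨c, s⟩ : ℂ)‖ = 1 := by
    rw [Complex.norm_def, Complex.normSq_mk, show c*c+s*s = 1 by nlinarith, Real.sqrt_one]
  have hz0 : (⟨c, s⟩ : ℂ) ≠ 0 := by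
    intro h0; rw [h0] at hz; simp at hz
  refine ⟨Complex.arg ⟨c, s⟩, ?_, ?_⟩
  · rw [Complex.cos_arg hz0, hz]; simp
  · rw [Complex.sin_arg, hz]; simp

noncomputable def Rz (θ : ℝ) : Matrix (Fin 3) (Fin 3) ℝ :=
  !![Real.cos θ, -Real.sin θ, 0; Real.sin θ, Real.cos θ, 0; 0, 0, 1]

noncomputable def Rx (θ : ℝ) : Matrix (Fin 3) (Fin 3) ℝ :=
  !![1, 0, 0; 0, Real.cos θ, -Real.sin θ; 0, Real.sin θ, Real.cos θ]

def Realizable (U : Matrix (Fin 3) (Fin 3) ℝ) : Prop :=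
  ∃ a : ℍ[ℝ], ‖a‖ = 1 ∧
    ∀ x : ℍ[ℝ], x.re = 0 → a * x * star a = pureOfVec (U.mulVec (vecOfPure x))

lemma norm_one_of_normSq (a : ℍ[ℝ]) (h : Quaternion.normSq a = 1) : ‖a‖ = 1 := by
  have := Quaternion.normSq_eq_norm_mul_self a
  nlinarith [norm_nonneg a]

lemma realizable_mul {U V : Matrix (Fin 3) (Fin 3) ℝ}
    (hU : Realizable U) (hV : Realizable V) : Realizable (U * V) := by
  obtain ⟨a, ha1, ha⟩ := hU
  obtain ⟨b, hb1, hb⟩ := hV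
  refine ⟨a * b, by rw [norm_mul, ha1, hb1, mul_one], ?_⟩
  intro x hx
  have h1 : (a * b) * x * star (a * b) = a * (b * x * star b) * star a := by
    rw [star_mul]; simp only [mul_assoc]
  rw [h1, hb x hx, ha _ rfl, vec_pure, ← Matrix.mulVec_mulVec]

lemma realizable_Rz (θ : ℝ) : Realizable (Rz θ) := by
  set c := Real.cos (θ/2) with hcdef
  set s := Real.sin (θ/2) with hsdef
  have hcs : s^2 + c^2 = 1 := Real.sin_sq_add_cos_sq (θ/2)
  have hs2 : s^2 = 1 - c^2 := by linarith
  have hc : Real.cos θ = c^2 - s^2 := by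
    have h := Real.cos_two_mul (θ/2)
    rw [show 2 * (θ/2) = θ by ring] at h
    rw [h, hs2]; ring
  have hsin : Real.sin θ = 2 * s * c := by
    have h := Real.sin_two_mul (θ/2)
    rw [show 2 * (θ/2) = θ by ring] at h
    rw [h]
  refine ⟨⟨c, 0, 0, s⟩, ?_, ?_⟩
  · apply norm_one_of_normSq
    erw [Quaternion.normSq_def']
    simp only []
    norm_num
    linarith [hcs]
  · intro x hx
    ext <;>
      simp [Rz, pureOfVec, vecOfPure, Matrix.mulVec, dotProduct,
        Fin.sum_univ_three, hx, hc, hsin,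
          Quaternion.re_mul (R := ℝ) ⟨c, 0, 0, s⟩, Quaternion.imI_mul (R := ℝ) ⟨c, 0, 0, s⟩, Quaternion.imJ_mul (R := ℝ) ⟨c, 0, 0, s⟩, Quaternion.imK_mul (R := ℝ) ⟨c, 0, 0, s⟩,
          Quaternion.re_star (R := ℝ) ⟨c, 0, 0, s⟩, Quaternion.imI_star (R := ℝ) ⟨c, 0, 0, s⟩, Quaternion.imJ_star (R := ℝ) ⟨c, 0, 0, s⟩, Quaternion.imK_star (R := ℝ) ⟨c, 0, 0, s⟩] <;>
      (try (ring_nf; simp only [hs2])) <;>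
      (try ring)

lemma realizable_Rx (θ : ℝ) : Realizable (Rx θ) := by
  set c := Real.cos (θ/2) with hcdef
  set s := Real.sin (θ/2) with hsdef
  have hcs : s^2 + c^2 = 1 := Real.sin_sq_add_cos_sq (θ/2)
  have hs2 : s^2 = 1 - c^2 := by linarith
  have hc : Real.cos θ = c^2 - s^2 := by
    have h := Real.cos_two_mul (θ/2)
    rw [show 2 * (θ/2) = θ by ring] at h
    rw [h, hs2]; ring
  have hsin : Real.sin θ = 2 * s * c := by
    have h := Real.sin_two_mul (θ/2)
    rw [show 2 * (θ/2) = θ by ring] at h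
    rw [h]
  refine ⟨⟨c, s, 0, 0⟩, ?_, ?_⟩
  · apply norm_one_of_normSq
    erw [Quaternion.normSq_def']
    simp only []
    norm_num
    linarith [hcs]
  · intro x hx
    ext <;>
      simp [Rx, pureOfVec, vecOfPure, Matrix.mulVec, dotProduct,
        Fin.sum_univ_three, hx, hc, hsin,
          Quaternion.re_mul (R := ℝ) ⟨c, s, 0, 0⟩, Quaternion.imI_mul (R := ℝ) ⟨c, s, 0, 0⟩, Quaternion.imJ_mul (R := ℝ) ⟨c, s, 0, 0⟩, Quaternion.imK_mul (R := ℝ) ⟨c, s, 0, 0⟩,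
          Quaternion.re_star (R := ℝ) ⟨c, s, 0, 0⟩, Quaternion.imI_star (R := ℝ) ⟨c, s, 0, 0⟩, Quaternion.imJ_star (R := ℝ) ⟨c, s, 0, 0⟩, Quaternion.imK_star (R := ℝ) ⟨c, s, 0, 0⟩] <;>
      (try (ring_nf; simp only [hs2])) <;>
      (try ring)


set_option maxHeartbeats 2000000 in
/-- Surjectivity of the covering map `T : B → SO(3)`: every rotation `U ∈ SO(3)` is
induced by conjugation `x ↦ a·x·ā` by some unit quaternion `a`. -/
theorem conjugation_onto_SO3
    (U : Matrix (Fin 3) (Fin 3) ℝ) (hU : U * U.transpose = 1) (hdet : U.det = 1) :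
    ∃ a : ℍ[ℝ], ‖a‖ = 1 ∧
      ∀ x : ℍ[ℝ], x.re = 0 → a * x * star a = pureOfVec (U.mulVec (vecOfPure x)) := by
  have hUtU : U.transpose * U = 1 := mul_eq_one_comm.mp hU
  have hadj : U.adjugate = U.transpose := by
    have h1 : U.adjugate * U = 1 := by rw [Matrix.adjugate_mul, hdet, one_smul]
    calc U.adjugate = U.adjugate * (U * U.transpose) := by rw [hU, Matrix.mul_one]
      _ = (U.adjugate * U) * U.transpose := by rw [Matrix.mul_assoc]
      _ = U.transpose := by rw [h1, Matrix.one_mul]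
  rw [Matrix.adjugate_fin_three] at hadj
  have a00 := congrFun (congrFun hadj 0) 0
  have a01 := congrFun (congrFun hadj 0) 1
  have a10 := congrFun (congrFun hadj 1) 0
  have a11 := congrFun (congrFun hadj 1) 1
  simp [Matrix.transpose_apply] at a00 a01 a10 a11
  have r22 := congrFun (congrFun hU 2) 2
  have c22 := congrFun (congrFun hUtU 2) 2
  have c00 := congrFun (congrFun hUtU 0) 0
  simp [Matrix.mul_apply, Fin.sum_univ_three, Matrix.transpose_apply,
    Matrix.one_apply] at r22 c22 c00
  -- r22 : U 2 0 * U 2 0 + U 2 1 * U 2 1 + U 2 2 * U 2 2 = 1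
  -- c22 : U 0 2 * U 0 2 + U 1 2 * U 1 2 + U 2 2 * U 2 2 = 1
  set s := Real.sqrt (1 - U 2 2 ^ 2) with hsdef
  have h22le : U 2 2 ^ 2 ≤ 1 := by nlinarith [r22]
  have hs2 : s ^ 2 = 1 - U 2 2 ^ 2 := Real.sq_sqrt (by linarith)
  suffices hreal : Realizable U by exact hreal
  by_cases hs : s = 0
  · -- degenerate case
    have hu22 : U 2 2 ^ 2 = 1 := by rw [hs] at hs2; nlinarith [hs2]
    have hz20 : U 2 0 = 0 := by nlinarith [r22]
    have hz21 : U 2 1 = 0 := by nlinarith [r22]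
    have hz02 : U 0 2 = 0 := by nlinarith [c22]
    have hz12 : U 1 2 = 0 := by nlinarith [c22]
    obtain ⟨γ, hγc, hγs⟩ := exists_cos_sin (U 0 0) (U 2 2 * U 1 0)
      (by nlinarith [c00])
    obtain ⟨β, hβc, hβs⟩ := exists_cos_sin (U 2 2) 0 (by nlinarith)
    have hUeq : U = Rx β * Rz γ := by
      ext i j
      fin_cases i <;> fin_cases j <;>
        simp [Rx, Rz, Matrix.mul_apply, Fin.sum_univ_three, hγc, hγs, hβc, hβs,
          hz20, hz21, hz02, hz12]
      · linear_combination (-(U 2 2)) * a01 + (-(U 0 1)) * hu22 + (U 2 1 * U 2 2) * hz02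
      · linear_combination (-(U 1 0)) * hu22
      · linear_combination (-1 : ℝ) * a11 + (-(U 2 0)) * hz02
    rw [hUeq]
    exact realizable_mul (realizable_Rx β) (realizable_Rz γ)
  · have hsnn : 0 ≤ s := Real.sqrt_nonneg _
    have hspos : 0 < s := lt_of_le_of_ne hsnn (Ne.symm hs)
    obtain ⟨α, hαc, hαs⟩ := exists_cos_sin (-(U 1 2)/s) (U 0 2/s) (by
      field_simp
      nlinarith [c22, hs2])
    obtain ⟨β, hβc, hβs⟩ := exists_cos_sin (U 2 2) s (by nlinarith [hs2])
    obtain ⟨γ, hγc, hγs⟩ := exists_cos_sin (U 2 1/s) (U 2 0/s) (by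
      field_simp
      nlinarith [r22, hs2])
    have hUeq : U = Rz α * (Rx β * Rz γ) := by
      ext i j
      fin_cases i <;> fin_cases j <;>
        simp [Rx, Rz, Matrix.mul_apply, Fin.sum_univ_three, hαc, hαs, hβc, hβs,
          hγc, hγs]
      · field_simp
        linear_combination U 0 0 * hs2 - a00 - U 2 2 * a11
      · field_simp
        linear_combination U 0 1 * hs2 - a10 + U 2 2 * a01
      · field_simp
      · field_simp
        linear_combination U 1 0 * hs2 - a01 + U 2 2 * a10
      · field_simp
        linear_combination U 1 1 * hs2 - a11 - U 2 2 * a00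
      · field_simp
      · field_simp
      · field_simp
    rw [hUeq]
    exact realizable_mul (realizable_Rz α)
      (realizable_mul (realizable_Rx β) (realizable_Rz γ))
end

section
/- Time derivative of a rotation in Rodrigues expression: let θ : ℝ → ℝ and w : ℝ → ℍ be differentiable, with w(t) a pure quaternion of norm 1 for every t. Set q(t) = cos(θ(t)/2) + sin(θ(t)/2)·w(t) and, for a fixed pure quaternion x, Q(t)x = q(t)·x·q(t)̄. Then for every t, d/dt (Q(t)x) = q(t)·(v(t) × x)·q(t)̄, where v(t) = θ̇(t)·w(t) + sin θ(t)·ẇ(t) + (1 − cos θ(t))·(ẇ(t) × w(t)). -/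
open scoped Quaternion

/-- The cross product of two pure quaternions, identified with vectors in ℝ³,
regarded again as a pure quaternion. -/
def quatCross (u v : ℍ[ℝ]) : ℍ[ℝ] :=
  ⟨0, u.imJ * v.imK - u.imK * v.imJ, u.imK * v.imI - u.imI * v.imK,
    u.imI * v.imJ - u.imJ * v.imI⟩

instance : StarModule ℝ ℍ[ℝ] := ⟨fun r a => by ext <;> simp⟩

lemma quatCross_two_smul (a x : ℍ[ℝ]) (ha : a.re = 0) (hx : x.re = 0) :
    quatCross ((2:ℝ) • a) x = a * x - x * a := by
  ext <;> simp [quatCross, Quaternion.re_mul, Quaternion.imI_mul,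
    Quaternion.imJ_mul, Quaternion.imK_mul, ha, hx] <;> ring

lemma coe_eq_smul_one (r : ℝ) : (r : ℍ[ℝ]) = r • (1:ℍ[ℝ]) := by
  rw [← Algebra.algebraMap_eq_smul_one]; rfl

lemma quatCross_re (u v : ℍ[ℝ]) : (quatCross u v).re = 0 := rfl
lemma quatCross_imI (u v : ℍ[ℝ]) : (quatCross u v).imI = u.imJ * v.imK - u.imK * v.imJ := rfl
lemma quatCross_imJ (u v : ℍ[ℝ]) : (quatCross u v).imJ = u.imK * v.imI - u.imI * v.imK := rfl
lemma quatCross_imK (u v : ℍ[ℝ]) : (quatCross u v).imK = u.imI * v.imJ - u.imJ * v.imI := rfl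

lemma rod_key (θt dθt : ℝ) (W DW : ℍ[ℝ])
    (hpure : W.re = 0) (hdw_pure : DW.re = 0)
    (hw2 : W.imI^2 + W.imJ^2 + W.imK^2 = 1)
    (horth : W.imI*DW.imI + W.imJ*DW.imJ + W.imK*DW.imK = 0)
    (hsin : Real.sin θt = 2 * Real.sin (θt/2) * Real.cos (θt/2))
    (hcos : Real.cos θt = 1 - 2 * Real.sin (θt/2)^2)
    (hpyth : Real.sin (θt/2)^2 + Real.cos (θt/2)^2 = 1) :
    (2:ℝ) • (star ((Real.cos (θt/2) : ℍ[ℝ]) + Real.sin (θt/2) • W) *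
      ((-Real.sin (θt/2) * (dθt/2) : ℝ) + (Real.sin (θt/2) • DW + (Real.cos (θt/2) * (dθt/2)) • W)))
    = dθt • W + Real.sin θt • DW + (1 - Real.cos θt) • quatCross DW W := by
  ext <;>
    simp only [quatCross_re, quatCross_imI, quatCross_imJ, quatCross_imK, Quaternion.re_smul, Quaternion.imI_smul, Quaternion.imJ_smul,
      Quaternion.imK_smul, Quaternion.re_mul, Quaternion.imI_mul, Quaternion.imJ_mul,
      Quaternion.imK_mul, Quaternion.re_add, Quaternion.imI_add, Quaternion.imJ_add,
      Quaternion.imK_add, Quaternion.re_star, Quaternion.imI_star, Quaternion.imJ_star,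
      Quaternion.imK_star, Quaternion.re_coe, Quaternion.imI_coe, Quaternion.imJ_coe,
      Quaternion.imK_coe, hpure, hdw_pure, hsin, hcos, smul_eq_mul] <;>
    first
      | linear_combination (Real.sin (θt/2) * Real.cos (θt/2) * dθt) * hw2
          + (2 * Real.sin (θt/2)^2) * horth
      | linear_combination (dθt * W.imI) * hpyth
      | linear_combination (dθt * W.imJ) * hpyth
      | linear_combination (dθt * W.imK) * hpyth

/-- Time derivative of a rotation in Rodrigues expression: with
`q(t) = cos(θ(t)/2) + sin(θ(t)/2)·w(t)` and `Q(t)x = q(t)·x·q(t)̄` for a fixed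
pure quaternion `x`, one has `d/dt (Q(t)x) = q(t)·(v(t) × x)·q(t)̄` where
`v(t) = θ̇(t)·w(t) + sin θ(t)·ẇ(t) + (1 − cos θ(t))·(ẇ(t) × w(t))`. -/
theorem time_derivative_of_rodrigues_rotation
    (θ dθ : ℝ → ℝ) (w dw : ℝ → ℍ[ℝ])
    (hθ : ∀ t, HasDerivAt θ (dθ t) t) (hw : ∀ t, HasDerivAt w (dw t) t)
    (hpure : ∀ t, (w t).re = 0) (hnorm : ∀ t, ‖w t‖ = 1)
    (x : ℍ[ℝ]) (hx : x.re = 0) (t : ℝ) :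
    HasDerivAt
      (fun s : ℝ =>
        ((Real.cos (θ s / 2) : ℍ[ℝ]) + Real.sin (θ s / 2) • w s) * x *
          star ((Real.cos (θ s / 2) : ℍ[ℝ]) + Real.sin (θ s / 2) • w s))
      (((Real.cos (θ t / 2) : ℍ[ℝ]) + Real.sin (θ t / 2) • w t) *
        quatCross
          (dθ t • w t + Real.sin (θ t) • dw t
            + (1 - Real.cos (θ t)) • quatCross (dw t) (w t)) x *
        star ((Real.cos (θ t / 2) : ℍ[ℝ]) + Real.sin (θ t / 2) • w t)) t := by
  have hw2 : (w t).imI^2 + (w t).imJ^2 + (w t).imK^2 = 1 := by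
    have h1 : Quaternion.normSq (w t) = 1 := by
      rw [Quaternion.normSq_eq_norm_mul_self, hnorm t]; ring
    rw [Quaternion.normSq_def'] at h1
    nlinarith [hpure t]
  have hdw_pure : (dw t).re = 0 := by
    have h1 : HasDerivAt (fun s => w s + star (w s)) (dw t + star (dw t)) t :=
      (hw t).add (hw t).star
    have h2 : (fun s : ℝ => w s + star (w s)) = fun _ => (0:ℍ[ℝ]) := by
      funext s; ext <;> simp [hpure s]
    rw [h2] at h1
    have h4 := congrArg QuaternionAlgebra.re (h1.unique (hasDerivAt_const t 0))
    simp at h4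
    linarith
  have horth : (w t).imI*(dw t).imI + (w t).imJ*(dw t).imJ + (w t).imK*(dw t).imK = 0 := by
    have h1 : HasDerivAt (fun s => w s * star (w s))
        (dw t * star (w t) + w t * star (dw t)) t := (hw t).mul (hw t).star
    have h2 : (fun s : ℝ => w s * star (w s)) = fun _ => (1:ℍ[ℝ]) := by
      funext s
      rw [Quaternion.self_mul_star, Quaternion.normSq_eq_norm_mul_self, hnorm s]
      norm_num
    rw [h2] at h1
    have h4 := congrArg QuaternionAlgebra.re (h1.unique (hasDerivAt_const t 1))
    simp [Quaternion.re_mul, hpure t, hdw_pure] at h4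
    linarith
  set q : ℍ[ℝ] := (Real.cos (θ t / 2) : ℍ[ℝ]) + Real.sin (θ t / 2) • w t with hqdef
  set q' : ℍ[ℝ] := ((-Real.sin (θ t/2) * (dθ t/2) : ℝ) : ℍ[ℝ]) +
      (Real.sin (θ t/2) • dw t + (Real.cos (θ t/2) * (dθ t/2)) • w t) with hq'def
  have hderivq : HasDerivAt (fun s => (Real.cos (θ s/2) : ℍ[ℝ]) + Real.sin (θ s/2) • w s) q' t := by
    have hh : HasDerivAt (fun s => θ s / 2) (dθ t / 2) t := (hθ t).div_const 2
    have hc : HasDerivAt (fun s => Real.cos (θ s/2)) (-Real.sin (θ t/2) * (dθ t/2)) t :=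
      (Real.hasDerivAt_cos _).comp t hh
    have hs : HasDerivAt (fun s => Real.sin (θ s/2)) (Real.cos (θ t/2) * (dθ t/2)) t :=
      (Real.hasDerivAt_sin _).comp t hh
    have hc' : HasDerivAt (fun s => (Real.cos (θ s/2) : ℍ[ℝ]))
        (((-Real.sin (θ t/2) * (dθ t/2) : ℝ)) : ℍ[ℝ]) t := by
      have := hc.smul_const (1:ℍ[ℝ])
      simpa [← coe_eq_smul_one] using this
    exact hc'.add (hs.smul (hw t))
  have hderivF : HasDerivAt
      (fun s : ℝ =>
        ((Real.cos (θ s / 2) : ℍ[ℝ]) + Real.sin (θ s / 2) • w s) * x *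
          star ((Real.cos (θ s / 2) : ℍ[ℝ]) + Real.sin (θ s / 2) • w s))
      (q' * x * star q + q * x * star q') t :=
    (hderivq.mul_const x).mul hderivq.star
  have hqq : q * star q = 1 := by
    rw [Quaternion.self_mul_star]
    have hns : Quaternion.normSq q = 1 := by
      rw [Quaternion.normSq_def']
      simp [hqdef, hpure t]
      nlinarith [Real.sin_sq_add_cos_sq (θ t/2)]
    rw [hns]
    norm_num
  have hsin : Real.sin (θ t) = 2 * Real.sin (θ t/2) * Real.cos (θ t/2) := by
    have h := Real.sin_two_mul (θ t / 2)
    rw [show 2 * (θ t / 2) = θ t by ring] at h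
    linarith
  have hcos : Real.cos (θ t) = 1 - 2 * Real.sin (θ t/2)^2 := by
    have h := Real.cos_two_mul (θ t / 2)
    rw [show 2 * (θ t / 2) = θ t by ring] at h
    nlinarith [Real.sin_sq_add_cos_sq (θ t/2)]
  have hfact3 : (2:ℝ) • (star q * q') = dθ t • w t + Real.sin (θ t) • dw t
      + (1 - Real.cos (θ t)) • quatCross (dw t) (w t) :=
    rod_key (θ t) (dθ t) (w t) (dw t) (hpure t) hdw_pure hw2 horth hsin hcos
      (Real.sin_sq_add_cos_sq (θ t/2))
  set a : ℍ[ℝ] := star q * q' with hadef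
  have hq'eq : q' = q * a := by rw [hadef, ← mul_assoc, hqq, one_mul]
  have hare : a.re = 0 := by
    have h5 := congrArg QuaternionAlgebra.re hfact3
    simp only [Quaternion.re_smul, Quaternion.re_add, hpure t, hdw_pure, smul_eq_mul,
      mul_zero, add_zero, zero_add, show (quatCross (dw t) (w t)).re = 0 from rfl] at h5
    linarith
  have hstara : star a = -a := by
    ext <;>
      simp only [Quaternion.re_star, Quaternion.imI_star, Quaternion.imJ_star,
        Quaternion.imK_star, Quaternion.re_neg, Quaternion.imI_neg, Quaternion.imJ_neg,
        Quaternion.imK_neg, hare] <;>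
      ring
  have key : q' * x * star q + q * x * star q' =
      q * quatCross ((2:ℝ) • a) x * star q := by
    rw [quatCross_two_smul _ x hare hx, hq'eq, star_mul, hstara]
    noncomm_ring
  rw [key, hfact3] at hderivF
  exact hderivF
end
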